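/- arXiv:1202.5721 — 6 statements merged into one kernel-verified Lean document; each statement's English description precedes it below -/
import Mathlib

section
/- For any finite simple graph G, the minimum number of dependent arcs over all acyclic orientations of G is at least the minimum number of edges whose deletion from G leaves a triangle-free graph. -/
open SimpleGraph

variable {V : Type*}

/-- An orientation of a simple graph: each edge gets exactly one direction. -/
structure GraphOrientation {V : Type*} (G : SimpleGraph V) where
  rel : V → V → Prop
  sub : ∀ ⦃u v⦄, rel u v → G.Adj u v
  cover : ∀ ⦃u v⦄, G.Adj u v → rel u v ∨ rel v u
  asymm : ∀ ⦃u v⦄, rel u v → ¬ rel v u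

/-- An orientation is acyclic if it has no directed cycle. -/
def GraphOrientation.Acyclic {G : SimpleGraph V} (D : GraphOrientation G) : Prop :=
  ∀ v, ¬ Relation.TransGen D.rel v v

/-- An arc `u → v` of an acyclic orientation is dependent iff its reversal creates a
directed cycle, equivalently there is another directed path from `u` to `v`. -/
def GraphOrientation.Dep {G : SimpleGraph V} (D : GraphOrientation G) (u v : V) : Prop :=
  D.rel u v ∧ Relation.TransGen (fun a b => D.rel a b ∧ ¬(a = u ∧ b = v)) u v

/-- The set of dependent arcs of an orientation. -/
def GraphOrientation.depArcs {G : SimpleGraph V} (D : GraphOrientation G) : Set (V × V) :=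
  {p | D.Dep p.1 p.2}

/-- The number of dependent arcs. -/
noncomputable def depCount {G : SimpleGraph V} (D : GraphOrientation G) : ℕ :=
  D.depArcs.ncard

/-- Minimum number of dependent arcs over all acyclic orientations. -/
noncomputable def dmin (G : SimpleGraph V) : ℕ :=
  sInf {k | ∃ D : GraphOrientation G, D.Acyclic ∧ depCount D = k}

/-- Maximum number of dependent arcs over all acyclic orientations. -/
noncomputable def dmax (G : SimpleGraph V) : ℕ :=
  sSup {k | ∃ D : GraphOrientation G, D.Acyclic ∧ depCount D = k}

/-- Minimum number of edges whose deletion makes `G` triangle-free. -/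
noncomputable def piT (G : SimpleGraph V) : ℕ :=
  sInf {k | ∃ S : Set (Sym2 V), S ⊆ G.edgeSet ∧ S.ncard = k ∧ (G.deleteEdges S).CliqueFree 3}

/-- The square of the cycle `C_n` on vertices `ZMod n`. -/
def cycleSq (n : ℕ) : SimpleGraph (ZMod n) where
  Adj u v := u ≠ v ∧ (u - v = 1 ∨ v - u = 1 ∨ u - v = 2 ∨ v - u = 2)
  symm := ⟨fun u v h => ⟨h.1.symm, by tauto⟩⟩
  loopless := ⟨fun u h => h.1 rfl⟩

/-
Every triangle of an acyclic orientation is transitively oriented, so its "long" arc `x → z`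
is dependent (the path `x → y → z` avoids it). Hence deleting the underlying edges of the
dependent arcs of an optimal acyclic orientation leaves a triangle-free graph, and there are
at most `d_min(G)` of those edges.
-/

namespace GraphOrientation

variable {G : SimpleGraph V}

def ofInjective {α : Type*} [LinearOrder α] (G : SimpleGraph V) (f : V → α)
    (hf : Function.Injective f) : GraphOrientation G where
  rel u v := G.Adj u v ∧ f u < f v
  sub _ _ h := h.1
  cover _ _ h := (lt_or_gt_of_ne (hf.ne h.ne)).imp (⟨h, ·⟩) (⟨h.symm, ·⟩)
  asymm _ _ h h' := lt_asymm h.2 h'.2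

theorem acyclic_ofInjective {α : Type*} [LinearOrder α] (f : V → α)
    (hf : Function.Injective f) : (ofInjective G f hf).Acyclic := by
  intro v hv
  have hlt : Relation.TransGen (· < ·) (f v) (f v) := hv.lift f fun _ _ h => h.2
  rw [Relation.transGen_eq_self] at hlt
  exact lt_irrefl _ hlt

theorem exists_acyclic (G : SimpleGraph V) : ∃ D : GraphOrientation G, D.Acyclic :=
  ⟨_, acyclic_ofInjective _ embeddingToCardinal.injective⟩

theorem dep_of_rel_of_rel (D : GraphOrientation G) {x y z : V}
    (hxy : D.rel x y) (hyz : D.rel y z) (hxz : D.rel x z) : D.Dep x z := by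
  refine ⟨hxz, .head ⟨hxy, ?_⟩ (.single ⟨hyz, ?_⟩)⟩
  · rintro ⟨-, rfl⟩
    exact (D.sub hyz).ne rfl
  · rintro ⟨rfl, -⟩
    exact (D.sub hxy).ne rfl

theorem exists_dep_of_triangle (D : GraphOrientation G) (hD : D.Acyclic)
    {a b c : V} (hab : G.Adj a b) (hbc : G.Adj b c) (hac : G.Adj a c) :
    ∃ x y, D.Dep x y ∧ (s(x, y) = s(a, b) ∨ s(x, y) = s(b, c) ∨ s(x, y) = s(a, c)) := by
  have cycle {x y z : V} (hxy : D.rel x y) (hyz : D.rel y z) (hzx : D.rel z x) : False :=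
    hD x (.head hxy (.head hyz (.single hzx)))
  rcases D.cover hab with r1 | r1 <;> rcases D.cover hbc with r2 | r2 <;>
    rcases D.cover hac with r3 | r3
  · exact ⟨a, c, dep_of_rel_of_rel D r1 r2 r3, by simp⟩
  · exact (cycle r1 r2 r3).elim
  · exact ⟨a, b, dep_of_rel_of_rel D r3 r2 r1, by simp⟩
  · exact ⟨c, b, dep_of_rel_of_rel D r3 r1 r2, by simp [Sym2.eq_swap]⟩
  · exact ⟨b, c, dep_of_rel_of_rel D r1 r3 r2, by simp⟩
  · exact ⟨b, a, dep_of_rel_of_rel D r2 r3 r1, by simp [Sym2.eq_swap]⟩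
  · exact (cycle r3 r2 r1).elim
  · exact ⟨c, a, dep_of_rel_of_rel D r2 r1 r3, by simp [Sym2.eq_swap]⟩

def depEdges (D : GraphOrientation G) : Set (Sym2 V) :=
  Sym2.mk.uncurry '' D.depArcs

theorem depEdges_subset_edgeSet (D : GraphOrientation G) : D.depEdges ⊆ G.edgeSet := by
  rintro _ ⟨⟨x, y⟩, hxy, rfl⟩
  exact D.sub hxy.1

theorem cliqueFree_three_deleteEdges_depEdges (D : GraphOrientation G) (hD : D.Acyclic) :
    (G.deleteEdges D.depEdges).CliqueFree 3 := by
  classical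
  intro t ht
  obtain ⟨a, b, c, hab, hac, hbc, rfl⟩ := Finset.card_eq_three.1 ht.2
  have hab : (G.deleteEdges D.depEdges).Adj a b := ht.1 (by simp) (by simp) hab
  have hbc : (G.deleteEdges D.depEdges).Adj b c := ht.1 (by simp) (by simp) hbc
  have hac : (G.deleteEdges D.depEdges).Adj a c := ht.1 (by simp) (by simp) hac
  rw [deleteEdges_adj] at hab hbc hac
  obtain ⟨x, y, hdep, hxy⟩ := exists_dep_of_triangle D hD hab.1 hbc.1 hac.1
  have hmem : s(x, y) ∈ D.depEdges := ⟨(x, y), hdep, rfl⟩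
  rcases hxy with h | h | h
  · exact hab.2 (h ▸ hmem)
  · exact hbc.2 (h ▸ hmem)
  · exact hac.2 (h ▸ hmem)

theorem piT_le_depCount [Finite V] (D : GraphOrientation G) (hD : D.Acyclic) :
    piT G ≤ depCount D :=
  calc piT G ≤ D.depEdges.ncard :=
        Nat.sInf_le ⟨_, D.depEdges_subset_edgeSet, rfl,
          D.cliqueFree_three_deleteEdges_depEdges hD⟩
    _ ≤ depCount D := Set.ncard_image_le

end GraphOrientation

theorem exists_acyclic_depCount_eq_dmin (G : SimpleGraph V) :
    ∃ D : GraphOrientation G, D.Acyclic ∧ depCount D = dmin G :=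
  have ⟨D, hD⟩ := GraphOrientation.exists_acyclic G
  Nat.sInf_mem (s := {k | ∃ D : GraphOrientation G, D.Acyclic ∧ depCount D = k})
    ⟨_, D, hD, rfl⟩

/-- `d_min(G) ≥ π_T(G)` for any finite graph `G`. -/
theorem stmt1 {V : Type*} [Fintype V] (G : SimpleGraph V) :
    piT G ≤ dmin G := by
  obtain ⟨D, hD, hcount⟩ := exists_acyclic_depCount_eq_dmin G
  exact hcount ▸ D.piT_le_depCount hD
end

section
/- For n ≥ 7, the minimum number of edges whose deletion makes the square of the cycle C_n triangle-free equals ⌈n/2⌉. -/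
open SimpleGraph

variable {V : Type*}

/-! For `n ≥ 7` the triangles of `C_n^2` are exactly the `n` sets `{i, i + 1, i + 2}`, so deleting
`S` leaves no triangle iff `S` meets each of them. Every edge lies in at most two of these
triangles, hence `n ≤ 2 |S|`. Conversely the edges `{2k, 2k + 1}`, `k < ⌈n/2⌉`, meet all of them:
of the residues `i` and `i + 1` in `[0, n)` one is even, also when `i + 1` wraps around to `0`. -/

open Finset

variable {n : ℕ}

lemma ZMod.intCast_eq_zero_iff_of_natAbs_lt {k : ℤ} (hk : k.natAbs < n) :
    (k : ZMod n) = 0 ↔ k = 0 := by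
  rw [ZMod.intCast_zmod_eq_zero_iff_dvd]
  exact ⟨fun h => Int.eq_zero_of_dvd_of_natAbs_lt_natAbs h (by simpa using hk),
    fun h => h ▸ dvd_zero _⟩

lemma ZMod.natCast_ne_zero_of_lt {k : ℕ} (hk0 : 0 < k) (hk : k < n) : (k : ZMod n) ≠ 0 := by
  rw [Ne, ZMod.natCast_eq_zero_iff]
  exact fun h => absurd (Nat.le_of_dvd hk0 h) (by omega)

lemma cycleSq_adj_iff (hn : 3 ≤ n) {u v : ZMod n} :
    (cycleSq n).Adj u v ↔ ∃ d ∈ ({-2, -1, 1, 2} : Finset ℤ), v = u + d := by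
  have h1 : (1 : ZMod n) ≠ 0 := mod_cast ZMod.natCast_ne_zero_of_lt (k := 1) one_pos (by omega)
  have h2 : (2 : ZMod n) ≠ 0 := mod_cast ZMod.natCast_ne_zero_of_lt (k := 2) two_pos (by omega)
  constructor
  · rintro ⟨-, h | h | h | h⟩
    · exact ⟨-1, by simp, by push_cast; linear_combination -h⟩
    · exact ⟨1, by simp, by push_cast; linear_combination h⟩
    · exact ⟨-2, by simp, by push_cast; linear_combination -h⟩
    · exact ⟨2, by simp, by push_cast; linear_combination h⟩
  · rintro ⟨d, hd, rfl⟩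
    simp only [mem_insert, mem_singleton] at hd
    rcases hd with rfl | rfl | rfl | rfl <;> simp [cycleSq, h1, h2]

/-- The offsets `0, d, d + f` of a triangle `a, a + d, a + d + f` of `C_n^2`, read in `ℤ`. -/
lemma exists_consecutive_of_offsets :
    ∀ d ∈ ({-2, -1, 1, 2} : Finset ℤ), ∀ f ∈ ({-2, -1, 1, 2} : Finset ℤ),
      d + f ∈ ({-2, -1, 1, 2} : Finset ℤ) →
        ∃ m ∈ ({-2, -1, 0} : Finset ℤ), ({0, d, d + f} : Finset ℤ) = {m, m + 1, m + 2} := by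
  decide

lemma cycleSq_isNClique_three (hn : 7 ≤ n) {t : Finset (ZMod n)}
    (ht : (cycleSq n).IsNClique 3 t) : ∃ i, t = {i, i + 1, i + 2} := by
  classical
  obtain ⟨a, b, c, hab, hac, hbc, rfl⟩ := is3Clique_iff.1 ht
  obtain ⟨d, hd, rfl⟩ := (cycleSq_adj_iff (by omega)).1 hab
  obtain ⟨e, he, rfl⟩ := (cycleSq_adj_iff (by omega)).1 hac
  obtain ⟨f, hf, hdef⟩ := (cycleSq_adj_iff (by omega)).1 hbc
  obtain rfl : e = d + f := by
    have hsmall : (e - (d + f)).natAbs < n := by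
      simp only [mem_insert, mem_singleton] at hd he hf
      omega
    have := (ZMod.intCast_eq_zero_iff_of_natAbs_lt hsmall).1 (by push_cast; linear_combination hdef)
    omega
  obtain ⟨m, -, hm⟩ := exists_consecutive_of_offsets d hd f hf he
  refine ⟨a + m, ?_⟩
  have := congrArg (Finset.image fun x : ℤ => a + x) hm
  simpa [Finset.image_insert, add_assoc] using this

lemma cycleSq_deleteEdges_cliqueFree_three_iff (hn : 7 ≤ n) (S : Set (Sym2 (ZMod n))) :
    ((cycleSq n).deleteEdges S).CliqueFree 3 ↔
      ∀ i : ZMod n, s(i, i + 1) ∈ S ∨ s(i + 1, i + 2) ∈ S ∨ s(i, i + 2) ∈ S := by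
  classical
  have htriangle : ∀ i : ZMod n, ((cycleSq n).deleteEdges S).IsNClique 3 {i, i + 1, i + 2} ↔
      s(i, i + 1) ∉ S ∧ s(i, i + 2) ∉ S ∧ s(i + 1, i + 2) ∉ S := fun i => by
    have h01 : (cycleSq n).Adj i (i + 1) := (cycleSq_adj_iff (by omega)).2 ⟨1, by simp, by simp⟩
    have h02 : (cycleSq n).Adj i (i + 2) := (cycleSq_adj_iff (by omega)).2 ⟨2, by simp, by simp⟩
    have h12 : (cycleSq n).Adj (i + 1) (i + 2) :=
      (cycleSq_adj_iff (by omega)).2 ⟨1, by simp, by push_cast; ring⟩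
    simp only [is3Clique_triple_iff, deleteEdges_adj, h01, h02, h12, true_and]
  constructor
  · intro h i
    by_contra hS
    simp only [not_or] at hS
    exact h _ ((htriangle i).2 ⟨hS.1, hS.2.2, hS.2.1⟩)
  · intro h t ht
    obtain ⟨i, rfl⟩ := cycleSq_isNClique_three hn (ht.mono (deleteEdges_le S))
    have := (htriangle i).1 ht
    have := h i
    tauto

lemma le_two_mul_ncard_of_forall_mem_triangle (hn : 5 ≤ n) {S : Set (Sym2 (ZMod n))}
    (hS : ∀ i : ZMod n, s(i, i + 1) ∈ S ∨ s(i + 1, i + 2) ∈ S ∨ s(i, i + 2) ∈ S) :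
    n ≤ 2 * S.ncard := by
  have : NeZero n := ⟨by omega⟩
  have h1 : (1 : ZMod n) ≠ 0 := mod_cast ZMod.natCast_ne_zero_of_lt (k := 1) one_pos (by omega)
  have h2 : (2 : ZMod n) ≠ 0 := mod_cast ZMod.natCast_ne_zero_of_lt (k := 2) two_pos (by omega)
  have h3 : (3 : ZMod n) ≠ 0 := mod_cast ZMod.natCast_ne_zero_of_lt (k := 3) three_pos (by omega)
  have h4 : (4 : ZMod n) ≠ 0 := mod_cast ZMod.natCast_ne_zero_of_lt (k := 4) four_pos (by omega)
  have hex : ∀ i : ZMod n, ∃ e ∈ S, e = s(i, i + 1) ∨ e = s(i + 1, i + 2) ∨ e = s(i, i + 2) := by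
    intro i
    rcases hS i with h | h | h <;> exact ⟨_, h, by simp⟩
  choose f hfS hf using hex
  -- An edge lies in at most two of the triangles `{i, i + 1, i + 2}`; the bit tells them apart.
  let g : ZMod n → S × Bool := fun i => (⟨f i, hfS i⟩, decide (f i = s(i, i + 1)))
  have hg : Function.Injective g := by
    intro i j hij
    simp only [g, Prod.mk.injEq, Subtype.mk.injEq, decide_eq_decide] at hij
    obtain ⟨hfij, htag⟩ := hij
    rcases hf i with hi | hi | hi <;> rcases hf j with hj | hj | hj <;>
      rw [hi, hj] at hfij <;> rw [Sym2.eq_iff] at hfij <;> grind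
  calc n = Nat.card (ZMod n) := (Nat.card_zmod n).symm
    _ ≤ Nat.card (S × Bool) := Nat.card_le_card_of_injective g hg
    _ = 2 * S.ncard := by simp [Nat.card_prod, mul_comm]

def alternateEdges (n : ℕ) : Finset (Sym2 (ZMod n)) :=
  (range ((n + 1) / 2)).image fun k : ℕ => s(2 * (k : ZMod n), 2 * (k : ZMod n) + 1)

lemma card_alternateEdges (hn : 3 ≤ n) : (alternateEdges n).card = (n + 1) / 2 := by
  rw [alternateEdges, card_image_of_injOn, card_range]
  intro k hk j hj h
  simp only [coe_range, Set.mem_Iio] at hk hj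
  rcases Sym2.eq_iff.1 h with ⟨h, -⟩ | ⟨h, h'⟩
  · have : ((2 * k : ℕ) : ZMod n) = ((2 * j : ℕ) : ZMod n) := by push_cast; exact h
    rw [ZMod.natCast_eq_natCast_iff', Nat.mod_eq_of_lt (by omega), Nat.mod_eq_of_lt (by omega)]
      at this
    omega
  · exact absurd (by linear_combination h' - h) (ZMod.natCast_ne_zero_of_lt (k := 2) two_pos hn)

lemma alternateEdges_subset_edgeSet (hn : 3 ≤ n) :
    (alternateEdges n : Set (Sym2 (ZMod n))) ⊆ (cycleSq n).edgeSet := by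
  intro e he
  obtain ⟨k, -, rfl⟩ := mem_image.1 he
  exact (cycleSq_adj_iff hn).2 ⟨1, by simp, by simp⟩

lemma mem_alternateEdges_or (hn : 0 < n) (i : ZMod n) :
    s(i, i + 1) ∈ alternateEdges n ∨ s(i + 1, i + 2) ∈ alternateEdges n := by
  have : NeZero n := ⟨hn.ne'⟩
  have hedge : ∀ k < (n + 1) / 2, s(2 * (k : ZMod n), 2 * k + 1) ∈ alternateEdges n :=
    fun k hk => mem_image.2 ⟨k, mem_range.2 hk, rfl⟩
  obtain ⟨k, hk | hk⟩ := Nat.even_or_odd' i.val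
  · left
    convert hedge k (by have := i.val_lt; omega) using 2 <;> rw [← ZMod.natCast_zmod_val i, hk] <;>
      push_cast <;> ring
  · right
    rcases lt_or_eq_of_le (show i.val + 1 ≤ n from i.val_lt) with hlt | heq
    · convert hedge (k + 1) (by omega) using 2 <;> rw [← ZMod.natCast_zmod_val i, hk] <;>
        push_cast <;> ring
    · have hi : i + 1 = 0 := by
        have := congrArg (Nat.cast : ℕ → ZMod n) heq
        rwa [Nat.cast_add, ZMod.natCast_zmod_val, Nat.cast_one, ZMod.natCast_self] at this
      convert hedge 0 (by omega) using 2 <;> push_cast <;> linear_combination hi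

/-- For `n ≥ 7`, `π_T(C_n^2) = ⌈n/2⌉`. -/
theorem stmt4 (n : ℕ) (hn : 7 ≤ n) :
    piT (cycleSq n) = (n + 1) / 2 := by
  have hfree : ((cycleSq n).deleteEdges (alternateEdges n)).CliqueFree 3 :=
    (cycleSq_deleteEdges_cliqueFree_three_iff hn _).2 fun i =>
      (mem_alternateEdges_or (by omega) i).imp_right Or.inl
  refine IsLeast.csInf_eq ⟨⟨alternateEdges n, alternateEdges_subset_edgeSet (by omega),
    by rw [Set.ncard_coe_finset, card_alternateEdges (by omega)], hfree⟩, ?_⟩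
  rintro k ⟨S, -, rfl, hS⟩
  have := le_two_mul_ncard_of_forall_mem_triangle (by omega)
    ((cycleSq_deleteEdges_cliqueFree_three_iff hn S).1 hS)
  omega
end

section
/- For even n ≥ 7, the edge set S = {v_1v_2, v_3v_4, …, v_{n−1}v_0} of size n/2 has the property that C_n^2 − S is triangle-free. -/
open SimpleGraph

variable {V : Type*}

/-!
Write the vertex set as `ZMod n`. Three pairwise adjacent vertices `c + d₁`, `c + d₂`, `c`
of `C_n^2` satisfy `d₁, d₂, d ∈ {±1, ±2}` and `d₁ ≡ d₂ + d (mod n)`, where `d` is the step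
from `c + d₂` to `c + d₁`; since `|d₁ - d₂ - d| ≤ 6 < n` the congruence is an equation in `ℤ`,
so every triangle is `{x, x + 1, x + 2}`. For even `n` the parity of a residue is well defined,
so one of `x`, `x + 1` is odd, and the edge starting there belongs to the deleted matching.
-/
lemma ZMod.eq_of_intCast_eq_of_abs_sub_lt {n : ℕ} {a b : ℤ} (h : (a : ZMod n) = b)
    (hab : |a - b| < n) : a = b :=
  sub_eq_zero.mp <| Int.eq_zero_of_abs_lt_dvd
    ((ZMod.intCast_zmod_eq_zero_iff_dvd _ n).mp (by push_cast; rw [h, sub_self])) hab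

def oddEdge (n k : ℕ) : Sym2 (ZMod n) :=
  s(((2 * k + 1 : ℕ) : ZMod n), ((2 * k + 2 : ℕ) : ZMod n))

def oddMatching (n : ℕ) : Set (Sym2 (ZMod n)) :=
  {e | ∃ k : ℕ, k < n / 2 ∧ e = oddEdge n k}

namespace oddMatching

variable {n : ℕ}

lemma injOn_oddEdge : Set.InjOn (oddEdge n) (Set.Iio (n / 2)) := by
  intro k hk k' hk' h
  simp only [Set.mem_Iio] at hk hk'
  rcases Sym2.eq_iff.mp h with ⟨h1, -⟩ | ⟨h1, h2⟩
  · have := congrArg ZMod.val h1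
    rwa [ZMod.val_cast_of_lt (by omega), ZMod.val_cast_of_lt (by omega), Nat.add_right_cancel_iff,
      Nat.mul_left_cancel_iff two_pos] at this
  -- The swapped case gives `n ∣ 2`, which forces `k = k' = 0`.
  · have h2n : ((2 : ℕ) : ZMod n) = 0 := by push_cast at h1 h2 ⊢; linear_combination h2 - h1
    have := Nat.le_of_dvd two_pos ((ZMod.natCast_eq_zero_iff 2 n).mp h2n)
    omega

theorem ncard : (oddMatching n).ncard = n / 2 := by
  have : oddMatching n = oddEdge n '' Set.Iio (n / 2) := by
    ext e
    simp only [oddMatching, Set.mem_ofPred_eq, Set.mem_image, Set.mem_Iio, eq_comm]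
  rw [this, injOn_oddEdge.ncard_image, Set.ncard_Iio_nat]

lemma mk_natCast_mem [NeZero n] (he : Even n) {m : ℕ} (hm : Odd m) :
    s((m : ZMod n), (m : ZMod n) + 1) ∈ oddMatching n := by
  obtain ⟨k, hk⟩ := hm.mod_even he
  have := m.mod_lt (NeZero.pos n)
  refine ⟨k, by omega, ?_⟩
  rw [oddEdge, ← ZMod.natCast_mod m n, hk]
  push_cast
  ring_nf

lemma mk_add_one_mem_or [NeZero n] (he : Even n) (x : ZMod n) :
    s(x, x + 1) ∈ oddMatching n ∨ s(x + 1, x + 2) ∈ oddMatching n := by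
  rcases Nat.even_or_odd x.val with hx | hx
  · right
    have := mk_natCast_mem he hx.add_one
    push_cast at this
    rwa [ZMod.natCast_zmod_val, add_assoc, one_add_one_eq_two] at this
  · left
    simpa using mk_natCast_mem he hx

end oddMatching

namespace cycleSq

variable {n : ℕ}

lemma exists_int_of_adj {u v : ZMod n} (h : (cycleSq n).Adj u v) :
    ∃ d : ℤ, d ≠ 0 ∧ -2 ≤ d ∧ d ≤ 2 ∧ u = v + d := by
  rcases h.2 with h | h | h | h
  · exact ⟨1, by omega, by omega, by omega, by push_cast; linear_combination h⟩
  · exact ⟨-1, by omega, by omega, by omega, by push_cast; linear_combination -h⟩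
  · exact ⟨2, by omega, by omega, by omega, by push_cast; linear_combination h⟩
  · exact ⟨-2, by omega, by omega, by omega, by push_cast; linear_combination -h⟩

theorem eq_consecutive_of_isNClique_three (hn : 7 ≤ n) {t : Finset (ZMod n)}
    (ht : (cycleSq n).IsNClique 3 t) : ∃ x, t = {x, x + 1, x + 2} := by
  obtain ⟨a, b, c, hab, hac, hbc, rfl⟩ := SimpleGraph.is3Clique_iff.mp ht
  obtain ⟨d₁, hd₁, hd₁l, hd₁u, rfl⟩ := exists_int_of_adj hac
  obtain ⟨d₂, hd₂, hd₂l, hd₂u, rfl⟩ := exists_int_of_adj hbc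
  obtain ⟨d, hd, hdl, hdu, h⟩ := exists_int_of_adj hab
  have : d₁ = d₂ + d :=
    ZMod.eq_of_intCast_eq_of_abs_sub_lt (n := n) (by push_cast; linear_combination h)
    (by rw [abs_lt]; omega)
  refine ⟨c + (min 0 (min d₁ d₂) : ℤ), ?_⟩
  obtain ⟨rfl, rfl⟩ | ⟨rfl, rfl⟩ | ⟨rfl, rfl⟩ | ⟨rfl, rfl⟩ | ⟨rfl, rfl⟩ | ⟨rfl, rfl⟩ :
      (d₁ = 2 ∧ d₂ = 1) ∨ (d₁ = 1 ∧ d₂ = 2) ∨ (d₁ = 1 ∧ d₂ = -1) ∨ (d₁ = -1 ∧ d₂ = 1) ∨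
        (d₁ = -1 ∧ d₂ = -2) ∨ (d₁ = -2 ∧ d₂ = -1) := by omega
  all_goals
    ext v
    simp only [Finset.mem_insert, Finset.mem_singleton]
    norm_num
    ring_nf <;> tauto

end cycleSq

open oddMatching in
theorem cliqueFree_three_deleteEdges_oddMatching {n : ℕ} (hn : 7 ≤ n) (he : Even n) :
    ((cycleSq n).deleteEdges (oddMatching n)).CliqueFree 3 := by
  have : NeZero n := ⟨by omega⟩
  intro t ht
  obtain ⟨x, rfl⟩ := cycleSq.eq_consecutive_of_isNClique_three hn (ht.mono (deleteEdges_le _))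
  obtain ⟨h₀₁, -, h₁₂⟩ := is3Clique_triple_iff.mp ht
  rcases mk_add_one_mem_or he x with h | h
  · exact (deleteEdges_adj.mp h₀₁).2 h
  · exact (deleteEdges_adj.mp h₁₂).2 h

/-- For even `n ≥ 7`, deleting the `n/2` edges `v_1v_2, v_3v_4, …, v_{n-1}v_0`
from `C_n^2` leaves a triangle-free graph. -/
theorem stmt5 (n : ℕ) (hn : 7 ≤ n) (he : Even n) :
    ({e : Sym2 (ZMod n) | ∃ k : ℕ, k < n / 2 ∧
        e = s(((2 * k + 1 : ℕ) : ZMod n), ((2 * k + 2 : ℕ) : ZMod n))}.ncard = n / 2) ∧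
    ((cycleSq n).deleteEdges
      {e : Sym2 (ZMod n) | ∃ k : ℕ, k < n / 2 ∧
        e = s(((2 * k + 1 : ℕ) : ZMod n), ((2 * k + 2 : ℕ) : ZMod n))}).CliqueFree 3 :=
  ⟨oddMatching.ncard, cliqueFree_three_deleteEdges_oddMatching hn he⟩
end

section
/- For odd n ≥ 7, the edge set S = {v_0v_1, v_1v_2, v_3v_4, v_5v_6, …, v_{n−2}v_{n−1}} of size ⌈n/2⌉ has the property that C_n^2 − S is triangle-free. -/
open SimpleGraph

variable {V : Type*}

/-!
Every edge of `C_n^2` joins vertices whose difference is `±1` or `±2`. For `n ≥ 7` the three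
differences around a triangle are small integers summing to a multiple of `n`, hence to `0`,
which forces the triangle to be three consecutive vertices `x, x + 1, x + 2`. Since `n` is odd,
`S` contains `v_0v_1` and every edge `v_iv_{i+1}` with `i` odd, so one of the two cycle edges
`x(x+1)`, `(x+1)(x+2)` of each such triangle lies in `S`.
-/

theorem ZMod.natCast_eq_natCast_iff_of_lt {n a b : ℕ} (ha : a < n) (hb : b < n) :
    (a : ZMod n) = b ↔ a = b := by
  rw [ZMod.natCast_eq_natCast_iff', Nat.mod_eq_of_lt ha, Nat.mod_eq_of_lt hb]

section
variable {n : ℕ}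

theorem exists_int_of_cycleSq_adj {u v : ZMod n} (h : (cycleSq n).Adj u v) :
    ∃ d : ℤ, d ≠ 0 ∧ -2 ≤ d ∧ d ≤ 2 ∧ v = u + d := by
  rcases h.2 with h | h | h | h
  · exact ⟨-1, by norm_num, by norm_num, by norm_num, by push_cast; linear_combination -h⟩
  · exact ⟨1, by norm_num, by norm_num, by norm_num, by push_cast; linear_combination h⟩
  · exact ⟨-2, by norm_num, by norm_num, by norm_num, by push_cast; linear_combination -h⟩
  · exact ⟨2, by norm_num, by norm_num, by norm_num, by push_cast; linear_combination h⟩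

theorem exists_consecutive_of_isNClique_three (hn : 7 ≤ n) {s : Finset (ZMod n)}
    (hs : (cycleSq n).IsNClique 3 s) : ∃ x, x ∈ s ∧ x + 1 ∈ s ∧ x + 2 ∈ s := by
  obtain ⟨a, b, c, hab, hac, hbc, rfl⟩ := is3Clique_iff.1 hs
  obtain ⟨p, hp₀, hp₁, hp₂, rfl⟩ := exists_int_of_cycleSq_adj hab
  obtain ⟨q, hq₀, hq₁, hq₂, rfl⟩ := exists_int_of_cycleSq_adj hbc
  obtain ⟨r, hr₀, hr₁, hr₂, hr⟩ := exists_int_of_cycleSq_adj hac.symm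
  have hsum : p + q + r = 0 := by
    refine Int.eq_zero_of_abs_lt_dvd ((ZMod.intCast_zmod_eq_zero_iff_dvd _ n).1 ?_) ?_
    · push_cast
      linear_combination -hr
    · rw [abs_lt]
      omega
  have mem : ∀ t : ℤ, t = 0 ∨ t = p ∨ t = p + q →
      a + t ∈ ({a, a + p, a + p + q} : Finset (ZMod n)) := by
    rintro t (rfl | rfl | rfl) <;> simp [add_assoc]
  -- the offsets `0, p, p + q` are three consecutive integers; start at the smallest
  refine ⟨a + (min 0 (min p (p + q)) : ℤ), mem _ (by omega), ?_, ?_⟩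
  · simpa [add_assoc] using mem (min 0 (min p (p + q)) + 1) (by omega)
  · simpa [add_assoc] using mem (min 0 (min p (p + q)) + 2) (by omega)

def cutEdges (n : ℕ) : Set (Sym2 (ZMod n)) :=
  insert s((0 : ZMod n), (1 : ZMod n))
    {e : Sym2 (ZMod n) | ∃ k : ℕ, k < (n - 1) / 2 ∧
      e = s(((2 * k + 1 : ℕ) : ZMod n), ((2 * k + 2 : ℕ) : ZMod n))}

theorem edge_mem_cutEdges_or_succ_edge_mem_cutEdges (ho : Odd n) (x : ZMod n) :
    s(x, x + 1) ∈ cutEdges n ∨ s(x + 1, x + 2) ∈ cutEdges n := by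
  have : NeZero n := ⟨ho.pos.ne'⟩
  obtain ⟨i, hi, rfl⟩ : ∃ i < n, (i : ZMod n) = x := ⟨x.val, x.val_lt, x.natCast_zmod_val⟩
  obtain ⟨t, rfl⟩ := ho
  rcases Nat.even_or_odd' i with ⟨k, rfl | rfl⟩
  · right
    by_cases hk : k = t
    · subst hk
      have h1 : ((2 * k : ℕ) : ZMod (2 * k + 1)) + 1 = 0 := by
        exact_mod_cast ZMod.natCast_self (2 * k + 1)
      have h2 : ((2 * k : ℕ) : ZMod (2 * k + 1)) + 2 = 1 := by linear_combination h1
      rw [h1, h2]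
      exact Set.mem_insert _ _
    · exact Set.mem_insert_of_mem _ ⟨k, by omega, by push_cast; ring_nf⟩
  · left
    exact Set.mem_insert_of_mem _ ⟨k, by omega, by push_cast; ring_nf⟩

theorem ncard_cutEdges (ho : Odd n) : (cutEdges n).ncard = (n + 1) / 2 := by
  set f : ℕ → Sym2 (ZMod n) := fun k =>
    s(((2 * k + 1 : ℕ) : ZMod n), ((2 * k + 2 : ℕ) : ZMod n))
  have hset :
      cutEdges n = ↑(insert s((0 : ZMod n), 1) ((Finset.range ((n - 1) / 2)).image f)) := by
    ext e
    simp [cutEdges, f, eq_comm]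
  have hinj : Set.InjOn f ↑(Finset.range ((n - 1) / 2)) := by
    intro j hj k hk hjk
    simp only [Finset.coe_range, Set.mem_Iio] at hj hk
    rcases Sym2.eq_iff.1 hjk with ⟨h, -⟩ | ⟨h, -⟩
    all_goals rw [ZMod.natCast_eq_natCast_iff_of_lt (by omega) (by omega)] at h; omega
  have hnotMem : s((0 : ZMod n), 1) ∉ (Finset.range ((n - 1) / 2)).image f := by
    simp only [Finset.mem_image, Finset.mem_range, not_exists, not_and]
    intro k hk hke
    rcases Sym2.eq_iff.1 hke with ⟨h, -⟩ | ⟨-, h⟩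
    all_goals
      rw [← Nat.cast_zero, ZMod.natCast_eq_natCast_iff_of_lt (by omega) (by omega)] at h
      omega
  rw [hset, Set.ncard_coe_finset, Finset.card_insert_of_notMem hnotMem,
    Finset.card_image_of_injOn hinj, Finset.card_range]
  obtain ⟨t, rfl⟩ := ho
  omega

theorem cliqueFree_three_deleteEdges_cutEdges (hn : 7 ≤ n) (ho : Odd n) :
    ((cycleSq n).deleteEdges (cutEdges n)).CliqueFree 3 := by
  have : Fact (1 < n) := ⟨by omega⟩
  intro s hs
  obtain ⟨x, hx₀, hx₁, hx₂⟩ :=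
    exists_consecutive_of_isNClique_three hn (hs.mono (deleteEdges_le _))
  have h₁ := hs.1 hx₀ hx₁ (by simp)
  have h₂ := hs.1 hx₁ hx₂ (by rw [← one_add_one_eq_two, ← add_assoc]; simp)
  rw [deleteEdges_adj] at h₁ h₂
  rcases edge_mem_cutEdges_or_succ_edge_mem_cutEdges ho x with h | h
  exacts [h₁.2 h, h₂.2 h]

end

/-- For odd `n ≥ 7`, deleting the `⌈n/2⌉` edges `v_0v_1, v_1v_2, v_3v_4, …, v_{n-2}v_{n-1}`
from `C_n^2` leaves a triangle-free graph. -/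
theorem stmt6 (n : ℕ) (hn : 7 ≤ n) (ho : Odd n) :
    ((insert s((0 : ZMod n), (1 : ZMod n))
        {e : Sym2 (ZMod n) | ∃ k : ℕ, k < (n - 1) / 2 ∧
          e = s(((2 * k + 1 : ℕ) : ZMod n), ((2 * k + 2 : ℕ) : ZMod n))}).ncard = (n + 1) / 2) ∧
    ((cycleSq n).deleteEdges
      (insert s((0 : ZMod n), (1 : ZMod n))
        {e : Sym2 (ZMod n) | ∃ k : ℕ, k < (n - 1) / 2 ∧
          e = s(((2 * k + 1 : ℕ) : ZMod n), ((2 * k + 2 : ℕ) : ZMod n))})).CliqueFree 3 :=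
  ⟨ncard_cutEdges ho, cliqueFree_three_deleteEdges_cutEdges hn ho⟩
end

section
/- Let D be an acyclic orientation of C_n^2 for even n ≥ 8 such that the set of underlying edges of the dependent arcs is exactly {v_1v_2, v_3v_4, …, v_{n−1}v_0}. Then no vertex v_i satisfies that one of the cycle edges v_{i−1}v_i, v_iv_{i+1} is directed into v_i and the other out of v_i. -/
open SimpleGraph

variable {V : Type*}

/-
If `i - 1 → i → i + 1` (or the reverse) were a directed path, the chord between `i - 1` and
`i + 1` would either close a directed triangle, contradicting acyclicity, or be dependent,
being bypassed by that path. But its endpoints differ by 2, while every edge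
`v_{2k+1} v_{2k+2}` joins vertices differing by 1, and `1 ≠ ±2` in `ZMod n` for `n > 3`.
-/

namespace GraphOrientation

variable {G : SimpleGraph V} (D : GraphOrientation G)

lemma dep_of_rel_of_rel_s16 {a b c : V} (hab : D.rel a b) (hbc : D.rel b c) (hac : D.rel a c) :
    D.Dep a c := by
  refine ⟨hac, .head ⟨hab, ?_⟩ (.single ⟨hbc, ?_⟩)⟩
  · rintro ⟨-, rfl⟩
    exact (D.sub hbc).ne rfl
  · rintro ⟨rfl, -⟩
    exact (D.sub hab).ne rfl

lemma Acyclic.dep_of_rel_of_rel_s16 {D : GraphOrientation G} (hD : D.Acyclic) {a b c : V}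
    (hab : D.rel a b) (hbc : D.rel b c) (hac : G.Adj a c) : D.Dep a c := by
  rcases D.cover hac with hac | hca
  · exact D.dep_of_rel_of_rel_s16 hab hbc hac
  · exact (hD a (.head hab (.head hbc (.single hca)))).elim

end GraphOrientation

lemma ZMod.natCast_ne_zero_of_pos_of_lt {m n : ℕ} (hm : 0 < m) (hmn : m < n) :
    (m : ZMod n) ≠ 0 := by
  rw [Ne, ZMod.natCast_eq_zero_iff]
  exact fun h => (Nat.le_of_dvd hm h).not_gt hmn

lemma cycleSq_adj_of_sub_eq_two {n : ℕ} (hn : 2 < n) {a b : ZMod n} (h : b - a = 2) :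
    (cycleSq n).Adj a b := by
  refine ⟨fun hab => ?_, by tauto⟩
  rw [hab, sub_self] at h
  exact ZMod.natCast_ne_zero_of_pos_of_lt (m := 2) two_pos hn (by exact_mod_cast h.symm)

lemma sym2_ne_of_sub_eq_two {n : ℕ} (hn : 3 < n) {a b : ZMod n} (h : b - a = 2) (c : ZMod n) :
    s(a, b) ≠ s(c, c + 1) := by
  have h1 : (1 : ZMod n) ≠ 0 := by
    exact_mod_cast ZMod.natCast_ne_zero_of_pos_of_lt one_pos (by omega)
  have h3 : (3 : ZMod n) ≠ 0 := by
    exact_mod_cast ZMod.natCast_ne_zero_of_pos_of_lt (m := 3) (by omega) hn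
  rw [Ne, Sym2.eq_iff]
  rintro (⟨rfl, rfl⟩ | ⟨rfl, rfl⟩)
  · exact h1 (by linear_combination -h)
  · exact h3 (by linear_combination -h)

theorem stmt16_general (n : ℕ) (hn : 8 ≤ n)
    (D : GraphOrientation (cycleSq n)) (hD : D.Acyclic)
    (hF : {e : Sym2 (ZMod n) | ∃ u v, D.Dep u v ∧ e = s(u, v)} =
      {e : Sym2 (ZMod n) | ∃ k : ℕ, k < n / 2 ∧
        e = s(((2 * k + 1 : ℕ) : ZMod n), ((2 * k + 2 : ℕ) : ZMod n))}) :
    ∀ i : ZMod n,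
      ¬ ((D.rel (i - 1) i ∧ D.rel i (i + 1)) ∨ (D.rel (i + 1) i ∧ D.rel i (i - 1))) := by
  have dep_adjacent {u v : ZMod n} (huv : D.Dep u v) : ∃ c : ZMod n, s(u, v) = s(c, c + 1) := by
    obtain ⟨k, -, hk⟩ := hF.subset ⟨u, v, huv, rfl⟩
    exact ⟨(2 * k + 1 : ℕ), hk.trans (by push_cast; ring_nf)⟩
  have chord (i : ZMod n) : (cycleSq n).Adj (i - 1) (i + 1) :=
    cycleSq_adj_of_sub_eq_two (by omega) (by ring)
  have chord_ne (i c : ZMod n) : s(i - 1, i + 1) ≠ s(c, c + 1) :=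
    sym2_ne_of_sub_eq_two (by omega) (by ring) c
  rintro i (⟨hin, hout⟩ | ⟨hin, hout⟩)
  · obtain ⟨c, hc⟩ := dep_adjacent (hD.dep_of_rel_of_rel_s16 hin hout (chord i))
    exact chord_ne i c hc
  · obtain ⟨c, hc⟩ := dep_adjacent (hD.dep_of_rel_of_rel_s16 hin hout (chord i).symm)
    exact chord_ne i c (Sym2.eq_swap.trans hc)

/-- For even `n ≥ 8`: if `D` is an acyclic orientation of `C_n^2` whose dependent arcs
have underlying edge set exactly `{v_1v_2, v_3v_4, …, v_{n-1}v_0}`, then no vertex has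
one incident cycle edge directed in and the other directed out. -/
theorem stmt16 (n : ℕ) (hn : 8 ≤ n) (he : Even n)
    (D : GraphOrientation (cycleSq n)) (hD : D.Acyclic)
    (hF : {e : Sym2 (ZMod n) | ∃ u v, D.Dep u v ∧ e = s(u, v)} =
      {e : Sym2 (ZMod n) | ∃ k : ℕ, k < n / 2 ∧
        e = s(((2 * k + 1 : ℕ) : ZMod n), ((2 * k + 2 : ℕ) : ZMod n))}) :
    ∀ i : ZMod n,
      ¬ ((D.rel (i - 1) i ∧ D.rel i (i + 1)) ∨ (D.rel (i + 1) i ∧ D.rel i (i - 1))) :=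
  stmt16_general n hn D hD hF
end

section
/- If G is a graph with chromatic number strictly less than its girth, then G has an acyclic orientation with no dependent arcs, i.e., d_min(G) = 0. -/
open SimpleGraph

variable {V : Type*}

/-
Colour `G` properly with `n = χ(G)` colours `0, …, n - 1` and orient every edge from its smaller
to its larger colour. Colours strictly increase along directed paths, so the orientation is
acyclic, and a directed path from `u` to `v` has length at most `C v - C u ≤ n - 1`. If an arc
`u → v` were dependent, a second directed path from `u` to `v` together with the edge `uv` would
contain a cycle of length at most `n < g(G)`, which is impossible.
-/

namespace SimpleGraph

variable {G : SimpleGraph V}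

theorem Walk.exists_length_le_of_reflTransGen {r : V → V → Prop}
    (hr : ∀ ⦃a b⦄, r a b → G.Adj a b) {f : V → ℕ} (hf : ∀ ⦃a b⦄, r a b → f a < f b)
    {x y : V} (h : Relation.ReflTransGen r x y) : ∃ p : G.Walk x y, f x + p.length ≤ f y := by
  induction h with
  | refl => exact ⟨.nil, by simp⟩
  | tail _ hbc ih =>
    obtain ⟨p, hp⟩ := ih
    refine ⟨p.concat (hr hbc), ?_⟩
    have := hf hbc
    rw [Walk.length_concat]
    omega

theorem girth_le_length_add_one_of_deleteEdges {u v : V} (huv : G.Adj u v)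
    (p : (G.deleteEdges {s(u, v)}).Walk u v) : G.girth ≤ p.length + 1 := by
  classical
  let q := (p.mapLe (G.deleteEdges_le _)).bypass
  have hq : s(v, u) ∉ q.edges := fun he => by
    have hp : s(v, u) ∈ p.edges := by simpa using Walk.edges_bypass_subset_edges _ he
    simpa [Sym2.eq_swap] using p.edges_subset_edgeSet hp
  have hcycle := Path.cons_isCycle ⟨q, Walk.bypass_isPath _⟩ huv.symm hq
  calc G.girth ≤ q.length + 1 := girth_le_length hcycle
    _ ≤ p.length + 1 := by
      simpa [q] using (p.mapLe (G.deleteEdges_le _)).length_bypass_le_length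

end SimpleGraph

namespace GraphOrientation

variable {G : SimpleGraph V}

theorem deleteEdges_adj_of_rel_of_ne {D : GraphOrientation G} {u v a b : V} (huv : D.rel u v)
    (hab : D.rel a b) (hne : ¬(a = u ∧ b = v)) : (G.deleteEdges {s(u, v)}).Adj a b := by
  refine deleteEdges_adj.2 ⟨D.sub hab, ?_⟩
  rw [Set.mem_singleton_iff, Sym2.eq_iff]
  rintro (h | ⟨rfl, rfl⟩)
  · exact hne h
  · exact D.asymm huv hab

def ofColoring {α : Type*} [LinearOrder α] (C : G.Coloring α) : GraphOrientation G where
  rel u v := G.Adj u v ∧ C u < C v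
  sub _ _ h := h.1
  cover _ _ h := (C.valid h).lt_or_gt.imp (⟨h, ·⟩) (⟨h.symm, ·⟩)
  asymm _ _ h h' := h.2.asymm h'.2

section

variable {α : Type*} [LinearOrder α] (C : G.Coloring α)

theorem ofColoring_lt_of_transGen {a b : V} (h : Relation.TransGen (ofColoring C).rel a b) :
    C a < C b := by
  have := h.lift C (p := (· < ·)) fun _ _ hr => hr.2
  rwa [Relation.transGen_eq_self] at this

theorem ofColoring_acyclic : (ofColoring C).Acyclic :=
  fun _ hv => lt_irrefl _ (ofColoring_lt_of_transGen C hv)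

end

theorem depArcs_ofColoring_eq_empty {n : ℕ} (C : G.Coloring (Fin n)) (hn : n < G.girth) :
    (ofColoring C).depArcs = ∅ := by
  refine Set.eq_empty_iff_forall_notMem.2 fun ⟨u, v⟩ ⟨huv, hpath⟩ => ?_
  obtain ⟨p, hp⟩ := SimpleGraph.Walk.exists_length_le_of_reflTransGen (G := G.deleteEdges _)
    (fun _ _ hab => deleteEdges_adj_of_rel_of_ne huv hab.1 hab.2) (f := fun x => (C x : ℕ))
    (fun _ _ hab => hab.1.2) hpath.to_reflTransGen
  have hgirth := SimpleGraph.girth_le_length_add_one_of_deleteEdges huv.1 p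
  have hv := (C v).isLt
  omega

end GraphOrientation

theorem stmt18_general {V : Type*} (G : SimpleGraph V)
    (h : G.chromaticNumber < G.girth) :
    ∃ D : GraphOrientation G, D.Acyclic ∧ depCount D = 0 := by
  obtain ⟨n, hn⟩ := ENat.ne_top_iff_exists.mp h.ne_top
  obtain ⟨C⟩ : G.Colorable n := by
    rw [← chromaticNumber_le_iff_colorable, ← hn]
  refine ⟨.ofColoring C, GraphOrientation.ofColoring_acyclic C, ?_⟩
  rw [← hn] at h
  rw [depCount, GraphOrientation.depArcs_ofColoring_eq_empty C (mod_cast h), Set.ncard_empty]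

/-- If `χ(G) < g(G)` then `G` has an acyclic orientation with no dependent arcs,
i.e. `d_min(G) = 0`. -/
theorem stmt18 {V : Type*} [Fintype V] (G : SimpleGraph V)
    (h : G.chromaticNumber < G.girth) :
    ∃ D : GraphOrientation G, D.Acyclic ∧ depCount D = 0 :=
  stmt18_general G h
end
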